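/- Let G be a finite simple undirected graph with eigenvalues λ_1 ≥ λ_2 ≥ ⋯ ≥ λ_n and spectral radius ρ = λ_1, and let m_k = Σ_{l=1}^n α_l λ_l^k be a spectral moment sequence of G with nonnegative weights α_l, where α_1 is the weight attached to λ_1. Then for every finite set J = {j_1, …, j_s} ⊂ ℕ, the s×s matrix whose (a,b) entry is ρ·(m_{j_a+j_b} − α_1·ρ^{j_a+j_b}) + (m_{j_a+j_b+1} − α_1·ρ^{j_a+j_b+1}) is positive semidefinite. -/

import Mathlib

open Matrix Finset

/-! The eigenvector `u` of `λ_l` has `|λ_l| = |u ⬝ A u| ≤ |u| ⬝ A |u|` because `A ≥ 0`, and the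
Rayleigh bound `x ⬝ A x ≤ λ_1 ‖x‖²` then gives `|λ_l| ≤ λ_1`, so `ρ = λ_1`. Writing `α'` for the
weights with `α_1` replaced by `0`, the `(a, b)` entry becomes
`∑_l α'_l (ρ + λ_l) λ_l^{j_a} λ_l^{j_b}`, a combination of rank-one matrices `v vᵀ` with
nonnegative coefficients `α'_l (ρ + λ_l)`. -/

namespace Matrix

variable {ι n : Type*} [Fintype ι] [Fintype n]

theorem posSemidef_of_sum_mul_pow_add (w μ : ι → ℝ) (hw : ∀ l, 0 ≤ w l) (e : n → ℕ) :
    (of fun a b : n => ∑ l, w l * μ l ^ (e a + e b)).PosSemidef := by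
  have hsum : (of fun a b : n => ∑ l, w l * μ l ^ (e a + e b)) =
      ∑ l, w l • vecMulVec (fun a => μ l ^ e a) (star fun a => μ l ^ e a) := by
    ext a b
    simp [vecMulVec_apply, sum_apply, pow_add]
  rw [hsum]
  exact posSemidef_sum _ fun l _ => (posSemidef_vecMulVec_self_star _).smul (hw l)

theorem abs_dotProduct_mulVec_le {A : Matrix n n ℝ} (hA : ∀ i j, 0 ≤ A i j) (x y : n → ℝ) :
    |x ⬝ᵥ (A *ᵥ y)| ≤ |x| ⬝ᵥ (A *ᵥ |y|) := by
  calc |x ⬝ᵥ (A *ᵥ y)| ≤ ∑ i, |x i * (A *ᵥ y) i| := abs_sum_le_sum_abs _ _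
    _ ≤ ∑ i, |x i| * ∑ j, A i j * |y j| := by
        gcongr with i
        rw [abs_mul]
        gcongr
        calc |(A *ᵥ y) i| ≤ ∑ j, |A i j * y j| := abs_sum_le_sum_abs _ _
          _ = ∑ j, A i j * |y j| := by simp only [abs_mul, abs_of_nonneg (hA i _)]
    _ = |x| ⬝ᵥ (A *ᵥ |y|) := rfl

variable [DecidableEq n] {A U : Matrix n n ℝ} {lam : n → ℝ}

theorem dotProduct_mulVec_le_of_mul_eq_mul_diagonal (hU : Uᵀ * U = 1)
    (hAU : A * U = U * diagonal lam) {c : ℝ} (hc : ∀ l, lam l ≤ c) (x : n → ℝ) :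
    x ⬝ᵥ (A *ᵥ x) ≤ c * (x ⬝ᵥ x) := by
  have hUU : U * Uᵀ = 1 := mul_eq_one_comm.mp hU
  have hA : A = U * diagonal lam * Uᵀ := by rw [← hAU, mul_assoc, hUU, mul_one]
  set y := Uᵀ *ᵥ x
  have hxAx : x ⬝ᵥ (A *ᵥ x) = y ⬝ᵥ (diagonal lam *ᵥ y) := by
    rw [hA, ← mulVec_mulVec, ← mulVec_mulVec, dotProduct_mulVec, ← mulVec_transpose]
  have hxx : x ⬝ᵥ x = y ⬝ᵥ y := by
    rw [dotProduct_mulVec, ← mulVec_transpose, transpose_transpose, mulVec_mulVec, hUU,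
      one_mulVec]
  rw [hxAx, hxx, dotProduct, dotProduct, mul_sum]
  refine sum_le_sum fun l _ => ?_
  rw [mulVec_diagonal, mul_left_comm]
  exact mul_le_mul_of_nonneg_right (hc l) (mul_self_nonneg _)

theorem abs_le_of_mul_eq_mul_diagonal (hA : ∀ i j, 0 ≤ A i j) (hU : Uᵀ * U = 1)
    (hAU : A * U = U * diagonal lam) {c : ℝ} (hc : ∀ l, lam l ≤ c) (l : n) : |lam l| ≤ c := by
  set u : n → ℝ := fun j => U j l
  have hAu : A *ᵥ u = lam l • u := by
    ext j
    have h := congrFun (congrFun hAU j) l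
    rw [mul_diagonal, mul_apply] at h
    simpa [mulVec, dotProduct, mul_comm] using h
  have huu : u ⬝ᵥ u = 1 := by
    simpa [mul_apply, dotProduct] using congrFun (congrFun hU l) l
  have habs : |u| ⬝ᵥ |u| = 1 := huu ▸ sum_congr rfl fun j _ => abs_mul_abs_self (u j)
  calc |lam l| = |u ⬝ᵥ (A *ᵥ u)| := by rw [hAu, dotProduct_smul, huu, smul_eq_mul, mul_one]
    _ ≤ |u| ⬝ᵥ (A *ᵥ |u|) := abs_dotProduct_mulVec_le hA u u
    _ ≤ c * (|u| ⬝ᵥ |u|) := dotProduct_mulVec_le_of_mul_eq_mul_diagonal hU hAU hc |u|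
    _ = c := by rw [habs, mul_one]

end Matrix

theorem Fintype.sum_update_zero_mul {ι R : Type*} [Fintype ι] [DecidableEq ι] [Ring R]
    (α f : ι → R) (i : ι) : ∑ l, Function.update α i 0 l * f l = ∑ l, α l * f l - α i * f i := by
  rw [← add_sum_erase _ _ (mem_univ i), ← add_sum_erase _ _ (mem_univ i), Function.update_self,
    zero_mul, zero_add, add_sub_cancel_left]
  refine Finset.sum_congr rfl fun l hl => ?_
  rw [Function.update_of_ne (ne_of_mem_erase hl)]

theorem mul_moment_sub_add_moment_sub_eq_sum_update {ι R : Type*} [Fintype ι] [DecidableEq ι]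
    [CommRing R] (α lam : ι → R) (i : ι) (s : ℕ) :
    lam i * (∑ l, α l * lam l ^ s - α i * lam i ^ s) +
        (∑ l, α l * lam l ^ (s + 1) - α i * lam i ^ (s + 1)) =
      ∑ l, Function.update α i 0 l * (lam i + lam l) * lam l ^ s := by
  have hsplit : ∑ l, α l * ((lam i + lam l) * lam l ^ s) =
      lam i * ∑ l, α l * lam l ^ s + ∑ l, α l * lam l ^ (s + 1) := by
    rw [mul_sum, ← sum_add_distrib]
    exact sum_congr rfl fun l _ => by ring
  simp_rw [mul_assoc (Function.update α i 0 _), Fintype.sum_update_zero_mul, hsplit]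
  ring

/-- Theorem 4.9 of the paper (Stieltjes-type conditions): for a spectral moment sequence
with weight `α₁` at `λ₁ = ρ`, the matrix with entries
`ρ (m_{j_a+j_b} - α₁ ρ^{j_a+j_b}) + (m_{j_a+j_b+1} - α₁ ρ^{j_a+j_b+1})` indexed by any
finite set `J ⊂ ℕ` is positive semidefinite. -/
theorem stmt_16 (n : ℕ) (hn : 1 ≤ n) (G : SimpleGraph (Fin n)) [DecidableRel G.Adj]
    (lam : Fin n → ℝ) (hlam : Antitone lam)
    (U : Matrix (Fin n) (Fin n) ℝ)
    (hU : Uᵀ * U = 1)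
    (hAU : G.adjMatrix ℝ * U = U * Matrix.diagonal lam)
    (rho : ℝ) (hrho : IsGreatest (Set.range fun l => |lam l|) rho)
    (α : Fin n → ℝ) (hα : ∀ l, 0 ≤ α l)
    (m : ℕ → ℝ) (hm : ∀ k, m k = ∑ l, α l * lam l ^ k) :
    ∀ J : Finset ℕ, (Matrix.of fun a b : J =>
      rho * (m (a.1 + b.1) - α ⟨0, hn⟩ * rho ^ (a.1 + b.1)) +
        (m (a.1 + b.1 + 1) - α ⟨0, hn⟩ * rho ^ (a.1 + b.1 + 1))).PosSemidef := by
  intro J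
  set i₀ : Fin n := ⟨0, hn⟩
  have hA : ∀ i j, 0 ≤ G.adjMatrix ℝ i j := fun i j => by
    rw [SimpleGraph.adjMatrix_apply]; split_ifs <;> norm_num
  have habs : ∀ l, |lam l| ≤ lam i₀ :=
    abs_le_of_mul_eq_mul_diagonal hA hU hAU fun l => hlam (Nat.zero_le l.val)
  have hρ : rho = lam i₀ := hrho.unique
    ⟨⟨i₀, abs_of_nonneg ((abs_nonneg _).trans (habs i₀))⟩, by rintro _ ⟨l, rfl⟩; exact habs l⟩
  have hw : ∀ l, 0 ≤ Function.update α i₀ 0 l * (rho + lam l) := fun l => by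
    refine mul_nonneg ?_ (neg_le_iff_add_nonneg'.mp (abs_le.mp (hrho.2 ⟨l, rfl⟩)).1)
    rcases eq_or_ne l i₀ with rfl | hl
    · simp
    · simp [hl, hα l]
  convert posSemidef_of_sum_mul_pow_add _ lam hw (Subtype.val : J → ℕ) using 2 with a b
  simp only [hm, hρ, mul_moment_sub_add_moment_sub_eq_sum_update]
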